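/- arXiv:1008.5218 — 2 statements merged into one kernel-verified Lean document; each statement's English description precedes it below -/
import Mathlib

section
/- Let A be real symmetric tridiagonal with diagonal a_1,…,a_n and positive subdiagonals b_1,…,b_{n−1}. Let λ be an eigenvalue with unit eigenvector x, and suppose |a_i − λ| > b_{i−1} + b_i for 1 ≤ i ≤ m (with b_0 = 0). Then |x_1| ≤ ∏_{i=1}^{m} b_i/(|a_i − λ| − b_{i−1}), i.e., the first eigenvector component is exponentially small in the product of the ratios. -/
/-!
Eliminating `λ` from row `k` of `(A - λ) x = 0` gives
`|a_k - λ| |x_k| ≤ b_{k-1} |x_{k-1}| + b_k |x_{k+1}|`. By induction from `k = 1` (where `b_0 = 0`),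
`(|a_k - λ| - b_{k-1}) |x_k| ≤ b_k |x_{k+1}|`: the gap at `k - 1` makes the previous ratio at most
one, so `|x_{k-1}| ≤ |x_k|` and the left neighbour is absorbed. Chaining the ratios for
`k = 1, …, m` and using `|x_{m+1}| ≤ ‖x‖ = 1` gives the bound.
-/

open Matrix

noncomputable def euclNorm {K : Type*} [RCLike K] {I : Type*} [Fintype I] (x : I → K) : ℝ :=
  Real.sqrt (∑ i, ‖x i‖ ^ 2)

/-- The n×n symmetric tridiagonal matrix with (1-based) diagonal `a 1, …, a n`
and off-diagonal entries `b 1, …, b (n-1)`. -/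
def tridiag (n : ℕ) (a b : ℕ → ℝ) : Matrix (Fin n) (Fin n) ℝ :=
  Matrix.of fun i j =>
    if (i : ℕ) = j then a ((i : ℕ) + 1)
    else if (i : ℕ) + 1 = j then b ((i : ℕ) + 1)
    else if (j : ℕ) + 1 = i then b ((j : ℕ) + 1)
    else 0

lemma tridiag_apply (n : ℕ) (a b : ℕ → ℝ) (i j : Fin n) :
    tridiag n a b i j = (if (j : ℕ) + 1 = i then b i else 0)
      + (if (j : ℕ) = i then a (i + 1) else 0) + (if (j : ℕ) = i + 1 then b (i + 1) else 0) := by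
  simp only [tridiag, of_apply]
  split_ifs <;> (try simp only [add_zero, zero_add]) <;> first | rfl | omega | congr 1

lemma tridiag_mulVec_apply (n : ℕ) (a b x : ℕ → ℝ) (hb0 : b 0 = 0) {r : ℕ} (hr : r + 1 < n) :
    (tridiag n a b *ᵥ fun i : Fin n => x (i + 1)) ⟨r, by omega⟩
      = b r * x r + a (r + 1) * x (r + 1) + b (r + 1) * x (r + 2) := by
  simp only [mulVec, dotProduct, tridiag_apply, add_mul, ite_mul, zero_mul, Finset.sum_add_distrib]
  rw [Fin.sum_univ_eq_sum_range (fun j => if j + 1 = r then b r * x (j + 1) else 0),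
    Fin.sum_univ_eq_sum_range (fun j => if j = r then a (r + 1) * x (j + 1) else 0),
    Fin.sum_univ_eq_sum_range (fun j => if j = r + 1 then b (r + 1) * x (j + 1) else 0),
    Finset.sum_ite_eq', Finset.sum_ite_eq']
  simp only [Finset.mem_range, if_pos (show r < n by omega), if_pos hr]
  congr 2
  rcases r with _ | s
  · simp [hb0]
  · simp only [add_left_inj, Finset.sum_ite_eq', Finset.mem_range, if_pos (show s < n by omega)]

lemma norm_apply_le_euclNorm {K : Type*} [RCLike K] {I : Type*} [Fintype I] (x : I → K) (i : I) :
    ‖x i‖ ≤ euclNorm x :=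
  Real.le_sqrt_of_sq_le (Finset.single_le_sum (f := fun j => ‖x j‖ ^ 2)
    (fun _ _ => sq_nonneg _) (Finset.mem_univ i))

lemma le_prod_Icc_mul_of_le_mul_succ {α : Type*} [CommSemiring α] [PartialOrder α]
    [IsOrderedRing α] {y r : ℕ → α} {m : ℕ} (hr : ∀ k ∈ Finset.Icc 1 m, 0 ≤ r k)
    (hy : ∀ k ∈ Finset.Icc 1 m, y k ≤ r k * y (k + 1)) :
    y 1 ≤ (∏ k ∈ Finset.Icc 1 m, r k) * y (m + 1) := by
  induction m with
  | zero => simp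
  | succ m ih =>
    have hsub : Finset.Icc 1 m ⊆ Finset.Icc 1 (m + 1) := Finset.Icc_subset_Icc_right m.le_succ
    have htop : m + 1 ∈ Finset.Icc 1 (m + 1) := by simp
    calc y 1 ≤ (∏ k ∈ Finset.Icc 1 m, r k) * y (m + 1) :=
          ih (fun k hk => hr k (hsub hk)) (fun k hk => hy k (hsub hk))
      _ ≤ (∏ k ∈ Finset.Icc 1 m, r k) * (r (m + 1) * y (m + 2)) :=
          mul_le_mul_of_nonneg_left (hy _ htop) (Finset.prod_nonneg fun k hk => hr k (hsub hk))
      _ = (∏ k ∈ Finset.Icc 1 (m + 1), r k) * y (m + 2) := by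
          rw [Finset.prod_Icc_succ_top (by omega), mul_assoc]

noncomputable def decayRatio (a b : ℕ → ℝ) (lam : ℝ) (i : ℕ) : ℝ :=
  b i / (|a i - lam| - b (i - 1))

section ThreeTermRecurrence

variable {a b x : ℕ → ℝ} {lam : ℝ} {m : ℕ}

lemma abs_sub_mul_abs_le {k : ℕ} (hb : 0 ≤ b (k - 1)) (hb' : 0 ≤ b k)
    (hrec : b (k - 1) * x (k - 1) + a k * x k + b k * x (k + 1) = lam * x k) :
    |a k - lam| * |x k| ≤ b (k - 1) * |x (k - 1)| + b k * |x (k + 1)| := by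
  have hneg : (a k - lam) * x k = -(b (k - 1) * x (k - 1) + b k * x (k + 1)) := by linarith
  calc |a k - lam| * |x k| = |b (k - 1) * x (k - 1) + b k * x (k + 1)| := by
        rw [← abs_mul, hneg, abs_neg]
    _ ≤ |b (k - 1) * x (k - 1)| + |b k * x (k + 1)| := abs_add_le _ _
    _ = b (k - 1) * |x (k - 1)| + b k * |x (k + 1)| := by
        rw [abs_mul, abs_mul, abs_of_nonneg hb, abs_of_nonneg hb']

lemma sub_mul_abs_le_of_gap (hb0 : b 0 = 0) (hb : ∀ i ≤ m, 0 ≤ b i)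
    (hgap : ∀ i, 1 ≤ i → i ≤ m → |a i - lam| > b (i - 1) + b i)
    (hrec : ∀ k, 1 ≤ k → k ≤ m → b (k - 1) * x (k - 1) + a k * x k + b k * x (k + 1) = lam * x k)
    {k : ℕ} (hk : 1 ≤ k) (hkm : k ≤ m) :
    (|a k - lam| - b (k - 1)) * |x k| ≤ b k * |x (k + 1)| := by
  induction k, hk using Nat.le_induction with
  | base =>
    simpa [hb0] using abs_sub_mul_abs_le (hb 0 (Nat.zero_le _)) (hb 1 hkm) (hrec 1 le_rfl hkm)
  | succ k hk ih =>
    have hprev : b k * |x k| ≤ b k * |x (k + 1)| :=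
      calc b k * |x k| ≤ (|a k - lam| - b (k - 1)) * |x k| := by
            gcongr; linarith [hgap k hk (by omega)]
        _ ≤ b k * |x (k + 1)| := ih (by omega)
    have := abs_sub_mul_abs_le (hb k (by omega)) (hb (k + 1) hkm) (hrec (k + 1) (by omega) hkm)
    simp only [Nat.add_sub_cancel] at this ⊢
    linarith

lemma decayRatio_nonneg (hb : ∀ i ≤ m, 0 ≤ b i)
    (hgap : ∀ i, 1 ≤ i → i ≤ m → |a i - lam| > b (i - 1) + b i) {i : ℕ} (hi : i ∈ Finset.Icc 1 m) :
    0 ≤ decayRatio a b lam i := by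
  rw [Finset.mem_Icc] at hi
  exact div_nonneg (hb i hi.2) (by linarith [hgap i hi.1 hi.2, hb i hi.2])

lemma abs_le_prod_decayRatio_mul (hb0 : b 0 = 0) (hb : ∀ i ≤ m, 0 ≤ b i)
    (hgap : ∀ i, 1 ≤ i → i ≤ m → |a i - lam| > b (i - 1) + b i)
    (hrec : ∀ k, 1 ≤ k → k ≤ m → b (k - 1) * x (k - 1) + a k * x k + b k * x (k + 1) = lam * x k) :
    |x 1| ≤ (∏ i ∈ Finset.Icc 1 m, decayRatio a b lam i) * |x (m + 1)| := by
  refine le_prod_Icc_mul_of_le_mul_succ (y := fun k => |x k|)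
    (fun i hi => decayRatio_nonneg hb hgap hi) (fun k hk => ?_)
  rw [Finset.mem_Icc] at hk
  have hden : 0 < |a k - lam| - b (k - 1) := by linarith [hgap k hk.1 hk.2, hb k hk.2]
  rw [decayRatio, div_mul_eq_mul_div, le_div_iff₀ hden, mul_comm]
  exact sub_mul_abs_le_of_gap hb0 hb hgap hrec hk.1 hk.2

end ThreeTermRecurrence

theorem stmt_6_general (n m : ℕ) (a b : ℕ → ℝ) (hb0 : b 0 = 0)
    (hbpos : ∀ i, 1 ≤ i → i ≤ n - 1 → 0 < b i)
    (hm : m ≤ n - 1)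
    (lam : ℝ) (x : ℕ → ℝ)
    (heig : (tridiag n a b).mulVec (fun i => x ((i : ℕ) + 1))
      = lam • fun i : Fin n => x ((i : ℕ) + 1))
    (hunit : euclNorm (fun i : Fin n => x ((i : ℕ) + 1)) = 1)
    (hgap : ∀ i, 1 ≤ i → i ≤ m → |a i - lam| > b (i - 1) + b i) :
    |x 1| ≤ ∏ i ∈ Finset.Icc 1 m, b i / (|a i - lam| - b (i - 1)) := by
  have hmn : m < n := by
    rcases Nat.eq_zero_or_pos n with rfl | hn
    · simp [euclNorm] at hunit
    · omega
  have hb : ∀ i ≤ m, 0 ≤ b i := fun i hi => by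
    rcases Nat.eq_zero_or_pos i with rfl | hi0
    · exact hb0.ge
    · exact (hbpos i hi0 (by omega)).le
  have hrec : ∀ k, 1 ≤ k → k ≤ m →
      b (k - 1) * x (k - 1) + a k * x k + b k * x (k + 1) = lam * x k := by
    rintro (_ | r) hk hkm
    · omega
    · have hrow := congrFun heig ⟨r, by omega⟩
      rw [tridiag_mulVec_apply n a b x hb0 (by omega)] at hrow
      simpa using hrow
  have hxm : |x (m + 1)| ≤ 1 := by
    simpa [hunit] using norm_apply_le_euclNorm (fun i : Fin n => x (i + 1)) ⟨m, hmn⟩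
  calc |x 1| ≤ (∏ i ∈ Finset.Icc 1 m, decayRatio a b lam i) * |x (m + 1)| :=
        abs_le_prod_decayRatio_mul hb0 hb hgap hrec
    _ ≤ ∏ i ∈ Finset.Icc 1 m, decayRatio a b lam i :=
        mul_le_of_le_one_right (Finset.prod_nonneg fun i hi => decayRatio_nonneg hb hgap hi) hxm

/-- Chained decay bound: the first eigenvector component is bounded by the
product of the one-step decay ratios.  `x` is 1-based, `x 0 = x (n+1) = 0`,
`b 0 = b n = 0`. -/
theorem stmt_6 (n m : ℕ) (a b : ℕ → ℝ) (hb0 : b 0 = 0) (hbn : b n = 0)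
    (hbpos : ∀ i, 1 ≤ i → i ≤ n - 1 → 0 < b i)
    (hm : m ≤ n - 1)
    (lam : ℝ) (x : ℕ → ℝ) (hx0 : x 0 = 0) (hxtop : x (n + 1) = 0)
    (heig : (tridiag n a b).mulVec (fun i => x ((i : ℕ) + 1))
      = lam • fun i : Fin n => x ((i : ℕ) + 1))
    (hunit : euclNorm (fun i : Fin n => x ((i : ℕ) + 1)) = 1)
    (hgap : ∀ i, 1 ≤ i → i ≤ m → |a i - lam| > b (i - 1) + b i) :
    |x 1| ≤ ∏ i ∈ Finset.Icc 1 m, b i / (|a i - lam| - b (i - 1)) :=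
  stmt_6_general n m a b hb0 hbpos hm lam x heig hunit hgap
end

section
/- Let A = [[A1, 0],[0, A2]] and Â = [[A1, t],[t^T, D]] where A2 = V D V^T with D diagonal and t = b V(1,:)^T for a scalar b > 0 (the aggressive early deflation setup). If the j-th diagonal entry d_j of D satisfies min_{λ ∈ spec(A1)} |d_j − λ| > 2‖t‖₂ and the j-th component |t_j| of t is small, then the eigenvalue of Â nearest d_j satisfies |λ̂ − d_j| ≤ 2|t_j| · τ + ‖t‖₂ τ², where τ = ‖t‖₂/(min_{λ∈spec(A1)} |d_j − λ| − 2‖t‖₂). -/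
/-! Let `g` be the distance from `d_j` to the spectrum of `A1`. Solving `(d_j - A1) y = e₁`
(possible since `g > 0`, with `‖y‖ ≤ 1 / g`), the vector `x = (t_j y, e_j)` satisfies
`(Â - d_j) x = (0, t_j ⟪e₁, y⟫ t)`, a residual of norm at most `|t_j| ‖t‖ / g` while `‖x‖ ≥ 1`.
For a symmetric matrix, `‖(S - μ) x‖ ≥ dist(μ, spec S) ‖x‖` (expand `x` in an orthonormal
eigenbasis), so some eigenvalue of `Â` lies within `|t_j| ‖t‖ / g` of `d_j`, and this is at most
`2 |t_j| τ + ‖t‖ τ²` since `g > g - 2‖t‖ > 0`. -/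

open Matrix

noncomputable def specNorm {K : Type*} [RCLike K] {I J : Type*} [Fintype I] [Fintype J]
    [DecidableEq J] (M : Matrix I J K) : ℝ :=
  ‖LinearMap.toContinuousLinearMap (Matrix.toEuclideanLin M)‖

noncomputable def ithEig {K : Type*} [RCLike K] {I : Type*} [Fintype I] [DecidableEq I]
    {A : Matrix I I K} (hA : A.IsHermitian) (i : Fin (Fintype.card I)) : ℝ :=
  (hA.eigenvalues ∘ (Fintype.equivFin I).symm)
    (Tuple.sort (hA.eigenvalues ∘ (Fintype.equivFin I).symm) i)

namespace LinearMap.IsSymmetric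

variable {𝕜 E : Type*} [RCLike 𝕜] [NormedAddCommGroup E] [InnerProductSpace 𝕜 E]
  [FiniteDimensional 𝕜 E] {T : E →ₗ[𝕜] E} {n : ℕ}

theorem mul_norm_le_norm_apply_sub_smul (hT : T.IsSymmetric) (hn : Module.finrank 𝕜 E = n)
    {μ c : ℝ} (hc : ∀ i, c ≤ |hT.eigenvalues hn i - μ|) (x : E) :
    c * ‖x‖ ≤ ‖T x - (μ : 𝕜) • x‖ := by
  rcases lt_or_ge c 0 with hc0 | hc0
  · exact (mul_nonpos_of_nonpos_of_nonneg hc0.le (norm_nonneg x)).trans (norm_nonneg _)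
  set b := hT.eigenvectorBasis hn
  have hrepr : ∀ i,
      b.repr (T x - (μ : 𝕜) • x) i = (hT.eigenvalues hn i - μ : ℝ) * b.repr x i := by
    intro i
    simp [b, hT.eigenvectorBasis_apply_self_apply, sub_mul, Algebra.smul_def]
  rw [← b.repr.norm_map x, ← b.repr.norm_map]
  refine le_of_pow_le_pow_left₀ two_ne_zero (norm_nonneg _) ?_
  rw [mul_pow, EuclideanSpace.norm_sq_eq, EuclideanSpace.norm_sq_eq, Finset.mul_sum]
  refine Finset.sum_le_sum fun i _ => ?_
  rw [hrepr, norm_mul, mul_pow, RCLike.norm_ofReal]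
  gcongr
  exact hc i

end LinearMap.IsSymmetric

section euclNorm

variable {K : Type*} [RCLike K] {I : Type*} [Fintype I]

theorem euclNorm_eq_norm_toLp (x : I → K) :
    euclNorm x = ‖(WithLp.toLp 2 x : EuclideanSpace K I)‖ :=
  (EuclideanSpace.norm_eq _).symm

theorem euclNorm_nonneg (x : I → K) : 0 ≤ euclNorm x := Real.sqrt_nonneg _

theorem euclNorm_eq_zero {x : I → K} : euclNorm x = 0 ↔ x = 0 := by
  rw [euclNorm_eq_norm_toLp, norm_eq_zero, WithLp.toLp_eq_zero]

theorem euclNorm_neg (x : I → K) : euclNorm (-x) = euclNorm x := by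
  rw [euclNorm_eq_norm_toLp, euclNorm_eq_norm_toLp, WithLp.toLp_neg, norm_neg]

theorem euclNorm_smul (c : K) (x : I → K) : euclNorm (c • x) = ‖c‖ * euclNorm x := by
  rw [euclNorm_eq_norm_toLp, euclNorm_eq_norm_toLp, WithLp.toLp_smul, norm_smul]

theorem euclNorm_single_one [DecidableEq I] (i : I) : euclNorm (Pi.single i (1 : K)) = 1 := by
  rw [euclNorm_eq_norm_toLp, PiLp.toLp_single, PiLp.norm_single, norm_one]

theorem euclNorm_le_euclNorm_sum_elim {J : Type*} [Fintype J] (x : I → K) (y : J → K) :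
    euclNorm y ≤ euclNorm (Sum.elim x y) := by
  unfold euclNorm
  gcongr
  rw [Fintype.sum_sum_type]
  simp only [Sum.elim_inr, le_add_iff_nonneg_left]
  positivity

theorem euclNorm_sum_elim_zero {J : Type*} [Fintype J] (y : J → K) :
    euclNorm (Sum.elim (0 : I → K) y) = euclNorm y := by
  simp [euclNorm, Fintype.sum_sum_type]

theorem abs_dotProduct_le (x y : I → ℝ) : |x ⬝ᵥ y| ≤ euclNorm x * euclNorm y := by
  rw [euclNorm_eq_norm_toLp, euclNorm_eq_norm_toLp, dotProduct_comm]
  exact abs_real_inner_le_norm (WithLp.toLp 2 x) (WithLp.toLp 2 y)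

end euclNorm

namespace Matrix.IsHermitian

variable {𝕜 : Type*} [RCLike 𝕜] {n : Type*} [Fintype n] [DecidableEq n] {A : Matrix n n 𝕜}

theorem mul_euclNorm_le_euclNorm_mulVec_sub_smul (hA : A.IsHermitian) {μ c : ℝ}
    (hc : ∀ i, c ≤ |hA.eigenvalues i - μ|) (x : n → 𝕜) :
    c * euclNorm x ≤ euclNorm (A *ᵥ x - (μ : 𝕜) • x) := by
  rw [euclNorm_eq_norm_toLp, euclNorm_eq_norm_toLp]
  refine (isSymmetric_toEuclideanLin_iff.mpr hA).mul_norm_le_norm_apply_sub_smul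
    finrank_euclideanSpace (fun i => ?_) _
  simpa [eigenvalues, eigenvalues₀] using hc (Fintype.equivOfCardEq (Fintype.card_fin _) i)

theorem exists_abs_eigenvalues_sub_mul_euclNorm_le [Nonempty n] (hA : A.IsHermitian) (μ : ℝ)
    (x : n → 𝕜) :
    ∃ i, |hA.eigenvalues i - μ| * euclNorm x ≤ euclNorm (A *ᵥ x - (μ : 𝕜) • x) := by
  obtain ⟨i, hi⟩ := Finite.exists_min fun i => |hA.eigenvalues i - μ|
  exact ⟨i, hA.mul_euclNorm_le_euclNorm_mulVec_sub_smul hi x⟩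

theorem exists_mulVec_sub_smul_eq (hA : A.IsHermitian) {μ c : ℝ} (hc0 : 0 < c)
    (hc : ∀ i, c ≤ |hA.eigenvalues i - μ|) (u : n → 𝕜) :
    ∃ y, A *ᵥ y - (μ : 𝕜) • y = u ∧ c * euclNorm y ≤ euclNorm u := by
  set L : (n → 𝕜) →ₗ[𝕜] n → 𝕜 := A.mulVecLin - (μ : 𝕜) • LinearMap.id
  have hL : ∀ y, L y = A *ᵥ y - (μ : 𝕜) • y := fun y => rfl
  have hinj : Function.Injective L := by
    refine (injective_iff_map_eq_zero L).mpr fun y hy => ?_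
    have := hA.mul_euclNorm_le_euclNorm_mulVec_sub_smul hc y
    rw [← hL, hy, euclNorm_eq_zero.mpr rfl] at this
    exact euclNorm_eq_zero.mp (le_antisymm (nonpos_of_mul_nonpos_right this hc0)
      (euclNorm_nonneg y))
  obtain ⟨y, rfl⟩ := LinearMap.injective_iff_surjective.mp hinj u
  exact ⟨y, rfl, hA.mul_euclNorm_le_euclNorm_mulVec_sub_smul hc y⟩

end Matrix.IsHermitian

theorem exists_ithEig_eq {K : Type*} [RCLike K] {I : Type*} [Fintype I] [DecidableEq I]
    {A : Matrix I I K} (hA : A.IsHermitian) (p : I) : ∃ i, ithEig hA i = hA.eigenvalues p :=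
  ⟨(Tuple.sort (hA.eigenvalues ∘ (Fintype.equivFin I).symm)).symm (Fintype.equivFin I p),
    by simp [ithEig]⟩

theorem exists_abs_eigenvalues_fromBlocks_vecMulVec_sub_le {ι κ : Type*} [Fintype ι]
    [DecidableEq ι] [Fintype κ] [DecidableEq κ] {A1 : Matrix ι ι ℝ} (hA1 : A1.IsHermitian)
    (d : κ → ℝ) {u : ι → ℝ} (hu : euclNorm u ≤ 1) (t : κ → ℝ)
    (hAhat : (fromBlocks A1 (vecMulVec u t) (vecMulVec u t)ᵀ (diagonal d)).IsHermitian)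
    (j : κ) {g : ℝ} (hg : 0 < g) (hgap : ∀ l, g ≤ |d j - hA1.eigenvalues l|) :
    ∃ p, |hAhat.eigenvalues p - d j| ≤ |t j| * euclNorm t / g := by
  obtain ⟨y, hy, hyu⟩ := hA1.exists_mulVec_sub_smul_eq hg
    (fun l => (hgap l).trans_eq (abs_sub_comm _ _)) (-u)
  have huy : |u ⬝ᵥ y| ≤ 1 / g := by
    refine (abs_dotProduct_le u y).trans ?_
    rw [le_div_iff₀ hg, mul_assoc, mul_comm (euclNorm y)]
    exact mul_le_one₀ hu (mul_nonneg hg.le (euclNorm_nonneg y))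
      ((hyu.trans_eq (euclNorm_neg u)).trans hu)
  set x : ι ⊕ κ → ℝ := Sum.elim (t j • y) (Pi.single j 1)
  have hres : fromBlocks A1 (vecMulVec u t) (vecMulVec u t)ᵀ (diagonal d) *ᵥ x - d j • x
      = Sum.elim (0 : ι → ℝ) ((t j * (u ⬝ᵥ y)) • t) := by
    ext (i | i)
    · have hyi := congr_fun hy i
      simp only [RCLike.ofReal_real_eq_id, id, Pi.sub_apply, Pi.smul_apply, smul_eq_mul,
        Pi.neg_apply] at hyi
      simp only [x, transpose_vecMulVec, fromBlocks_mulVec, Sum.elim_comp_inl, Sum.elim_comp_inr,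
        mulVec_smul, mulVec_single, MulOpposite.op_one, one_smul, vecMulVec_mulVec, op_smul_eq_smul,
        col_diagonal, Pi.sub_apply, Sum.elim_inl, Pi.add_apply, Pi.smul_apply, smul_eq_mul,
        col_apply, vecMulVec_apply, Pi.zero_apply]
      linear_combination t j * hyi
    · simp only [x, transpose_vecMulVec, fromBlocks_mulVec, Sum.elim_comp_inl, Sum.elim_comp_inr,
        mulVec_smul, mulVec_single, MulOpposite.op_one, one_smul, vecMulVec_mulVec, op_smul_eq_smul,
        col_diagonal, Pi.sub_apply, Sum.elim_inr, Pi.add_apply, Pi.smul_apply, smul_eq_mul,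
        Pi.single_apply, mul_ite, mul_one, mul_zero, add_sub_cancel_right]
      ring
  have : Nonempty κ := ⟨j⟩
  obtain ⟨p, hp⟩ := hAhat.exists_abs_eigenvalues_sub_mul_euclNorm_le (d j) x
  refine ⟨p, ?_⟩
  have hx : 1 ≤ euclNorm x := (euclNorm_single_one j).symm.trans_le
    (euclNorm_le_euclNorm_sum_elim _ _)
  calc |hAhat.eigenvalues p - d j| ≤ |hAhat.eigenvalues p - d j| * euclNorm x :=
        le_mul_of_one_le_right (abs_nonneg _) hx
    _ ≤ |t j| * |u ⬝ᵥ y| * euclNorm t := by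
        simpa only [RCLike.ofReal_real_eq_id, id, hres, euclNorm_sum_elim_zero, euclNorm_smul,
          Real.norm_eq_abs, abs_mul, mul_assoc] using hp
    _ ≤ |t j| * (1 / g) * euclNorm t := by
        gcongr
        exact euclNorm_nonneg t
    _ = |t j| * euclNorm t / g := by ring

theorem euclNorm_ite_val_eq_zero_le_one (m : ℕ) :
    euclNorm (fun i : Fin m => if (i : ℕ) = 0 then (1 : ℝ) else 0) ≤ 1 := by
  cases m with
  | zero => simp [euclNorm]
  | succ m =>
    have hsingle :
        (fun i : Fin (m + 1) => if (i : ℕ) = 0 then (1 : ℝ) else 0) = Pi.single 0 1 := by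
      ext i
      simp only [Pi.single_apply, Fin.val_eq_zero_iff]
    rw [hsingle, euclNorm_single_one]

theorem stmt_19_general {m k : ℕ}
    (A1 : Matrix (Fin m) (Fin m) ℝ) (hA1 : A1.IsHermitian)
    (d : Fin k → ℝ)
    (t : Fin k → ℝ)
    (T : Matrix (Fin m) (Fin k) ℝ)
    (hT : T = Matrix.of fun (i : Fin m) (j : Fin k) => if (i : ℕ) = 0 then t j else 0)
    (hAhat : (fromBlocks A1 T Tᵀ (Matrix.diagonal d)).IsHermitian)
    (j : Fin k)
    (hgap : (⨅ l, |d j - hA1.eigenvalues l|) > 2 * euclNorm t) :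
    ∃ i, |ithEig hAhat i - d j| ≤
      2 * |t j| * (euclNorm t / ((⨅ l, |d j - hA1.eigenvalues l|) - 2 * euclNorm t))
      + euclNorm t *
        (euclNorm t / ((⨅ l, |d j - hA1.eigenvalues l|) - 2 * euclNorm t)) ^ 2 := by
  obtain rfl : T = vecMulVec (fun i : Fin m => if (i : ℕ) = 0 then 1 else 0) t := by
    rw [hT]
    ext i l
    simp only [of_apply, vecMulVec_apply, ite_mul, one_mul, zero_mul]
  set g := ⨅ l, |d j - hA1.eigenvalues l|
  set ε := euclNorm t
  have hε : 0 ≤ ε := euclNorm_nonneg t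
  have hg : 0 < g := by linarith
  have hgap_le : ∀ l, g ≤ |d j - hA1.eigenvalues l| :=
    ciInf_le ⟨0, by rintro _ ⟨l, rfl⟩; exact abs_nonneg _⟩
  obtain ⟨p, hp⟩ := exists_abs_eigenvalues_fromBlocks_vecMulVec_sub_le hA1 d
    (euclNorm_ite_val_eq_zero_le_one m) t hAhat j hg hgap_le
  obtain ⟨i, hi⟩ := exists_ithEig_eq hAhat p
  refine ⟨i, hi ▸ hp.trans ?_⟩
  have hτ : ε / g ≤ ε / (g - 2 * ε) := div_le_div_of_nonneg_left hε (by linarith) (by linarith)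
  have hτ0 : 0 ≤ ε / (g - 2 * ε) := div_nonneg hε (by linarith)
  calc |t j| * ε / g = |t j| * (ε / g) := mul_div_assoc _ _ _
    _ ≤ 2 * |t j| * (ε / (g - 2 * ε)) := by nlinarith [abs_nonneg (t j)]
    _ ≤ _ := le_add_of_nonneg_right (by positivity)

/-- Aggressive early deflation bound: for the arrowhead matrix
`Â = [[A1, T],[Tᵀ, D]]` with spike `t = b·V(1,:)`, the eigenvalue of `Â`
nearest a diagonal entry `d j` of `D` is within `2|t_j| τ + ‖t‖ τ²` of `d j`,
where `τ = ‖t‖/(min_λ∈spec(A1) |d_j − λ| − 2‖t‖)`. -/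
theorem stmt_19 {m k : ℕ} (hk : 1 ≤ k)
    (A1 : Matrix (Fin m) (Fin m) ℝ) (hA1 : A1.IsHermitian)
    (d : Fin k → ℝ) (V : Matrix (Fin k) (Fin k) ℝ) (hV : Vᵀ * V = 1)
    (b : ℝ) (hb : 0 < b)
    (t : Fin k → ℝ) (ht : t = fun j => b * V ⟨0, hk⟩ j)
    (T : Matrix (Fin m) (Fin k) ℝ)
    (hT : T = Matrix.of fun (i : Fin m) (j : Fin k) => if (i : ℕ) = 0 then t j else 0)
    (hAhat : (fromBlocks A1 T Tᵀ (Matrix.diagonal d)).IsHermitian)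
    (j : Fin k)
    (hgap : (⨅ l, |d j - hA1.eigenvalues l|) > 2 * euclNorm t) :
    ∃ i, |ithEig hAhat i - d j| ≤
      2 * |t j| * (euclNorm t / ((⨅ l, |d j - hA1.eigenvalues l|) - 2 * euclNorm t))
      + euclNorm t *
        (euclNorm t / ((⨅ l, |d j - hA1.eigenvalues l|) - 2 * euclNorm t)) ^ 2 :=
  stmt_19_general A1 hA1 d t T hT hAhat j hgap
end
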